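/- Let T be a tree on vertex set V of a multigraph G, rooted at r, that is a disjoint union of maximal branches from r. Suppose U₁,…,U_ℓ are sets of children of r with pairwise disjoint associated branch sets, and for each i, f(U_i) upper-bounds the minimum, over choices of one edge per branch of U_i, of the number of G-edges cut by removing those edges from T (counting each cut edge at least once). If Σ|U_i| = k−1, then the union over i of the corresponding edge removals yields a k-cut of G of value at most Σᵢ f(U_i); in particular Σᵢ f(U_i) ≥ |OPT|, the minimum k-cut value of G. -/

import Mathlib

attribute [local instance] Classical.propDecidable

/-- `P` is a partition of the vertex set into `k` nonempty parts. -/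
def IsPartitionOn {V : Type*} (k : ℕ) (P : Fin k → Finset V) : Prop :=
  (∀ i, (P i).Nonempty) ∧ (∀ i j, i ≠ j → Disjoint (P i) (P j)) ∧ ∀ v : V, ∃ i, v ∈ P i

/-- The number of multigraph edges crossing between parts of `P`. -/
noncomputable def cutVal {V ι : Type*} [Fintype ι] {k : ℕ} (ends : ι → V × V)
    (P : Fin k → Finset V) : ℕ :=
  (Finset.univ.filter fun e : ι => ∀ i, ¬((ends e).1 ∈ P i ∧ (ends e).2 ∈ P i)).card

/-! The chosen vertices `t i u` are `k - 1` distinct non-root vertices, because the branches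
below distinct children of `r` are disjoint. Sending every vertex to its deepest chosen ancestor
(or to `r` if it has none) partitions `V` into `k` parts, and an edge joining two parts has exactly
one endpoint below some chosen vertex `t i u`, so it is one of the edges counted by `f i`. -/

open Finset

namespace ParentTree

variable {V : Type*} {par : V → V} {r : V} {d : V → ℕ}

def IsAncestor (par : V → V) (a v : V) : Prop :=
  Relation.ReflTransGen (fun s t => t = par s) v a

theorem eq_root_of_isAncestor_root (hroot : par r = r) {a : V} (h : IsAncestor par a r) :
    a = r := by
  induction h with
  | refl => rfl
  | tail _ hstep ih => rw [hstep, ih, hroot]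

theorem depth_le_of_isAncestor (hroot : par r = r) (hd : ∀ v, v ≠ r → d v = d (par v) + 1)
    {a v : V} (h : IsAncestor par a v) : d a ≤ d v := by
  induction h with
  | refl => rfl
  | @tail b _ _ hstep ih =>
    rw [hstep]
    by_cases hb : b = r
    · rwa [hb, hroot, ← hb]
    · have := hd b hb
      omega

theorem eq_of_isAncestor_of_depth_le (hroot : par r = r)
    (hd : ∀ v, v ≠ r → d v = d (par v) + 1) {a v : V} (h : IsAncestor par a v)
    (hle : d v ≤ d a) : a = v := by
  rcases Relation.ReflTransGen.cases_head h with rfl | ⟨_, rfl, hpar⟩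
  · rfl
  by_cases hv : v = r
  · subst hv
    rw [hroot] at hpar
    exact eq_root_of_isAncestor_root hroot hpar
  · have := depth_le_of_isAncestor hroot hd hpar
    have := hd v hv
    omega

theorem children_eq_of_isAncestor (hroot : par r = r) {u u' x : V}
    (hu : par u = r ∧ u ≠ r) (hu' : par u' = r ∧ u' ≠ r)
    (h : IsAncestor par u x) (h' : IsAncestor par u' x) : u = u' := by
  have key : ∀ {a b : V}, par a = r → b ≠ r → IsAncestor par b a → a = b := by
    intro a b ha hb hab
    rcases Relation.ReflTransGen.cases_head hab with rfl | ⟨_, rfl, hpar⟩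
    · rfl
    · rw [ha] at hpar
      exact absurd (eq_root_of_isAncestor_root hroot hpar) hb
  have hpar_unique : Relator.RightUnique fun s t : V => t = par s :=
    fun _ _ _ h₁ h₂ => h₁.trans h₂.symm
  rcases Relation.ReflTransGen.total_of_right_unique hpar_unique h h' with huu' | hu'u
  · exact key hu.1 hu'.2 huu'
  · exact (key hu'.1 hu.2 hu'u).symm

noncomputable def deepest (d : V → ℕ) (r : V) (B : Finset V) : V :=
  if h : B.Nonempty then (B.exists_max_image d h).choose else r

theorem deepest_mem {B : Finset V} (h : B.Nonempty) : deepest d r B ∈ B := by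
  rw [deepest, dif_pos h]
  exact (B.exists_max_image d h).choose_spec.1

theorem le_depth_deepest {B : Finset V} {b : V} (hb : b ∈ B) : d b ≤ d (deepest d r B) := by
  rw [deepest, dif_pos ⟨b, hb⟩]
  exact (B.exists_max_image d ⟨b, hb⟩).choose_spec.2 b hb

noncomputable def nearestAncestorIn (par : V → V) (d : V → ℕ) (r : V) (S : Finset V) (v : V) :
    V :=
  deepest d r {a ∈ S | IsAncestor par a v}

variable {S : Finset V}

theorem nearestAncestorIn_mem (v : V) : nearestAncestorIn par d r S v ∈ insert r S := by
  by_cases h : ({a ∈ S | IsAncestor par a v} : Finset V).Nonempty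
  · exact mem_insert_of_mem (mem_filter.1 (deepest_mem h)).1
  · rw [nearestAncestorIn, deepest, dif_neg h]
    exact mem_insert_self r S

theorem nearestAncestorIn_of_mem_insert (hroot : par r = r)
    (hd : ∀ v, v ≠ r → d v = d (par v) + 1) (hrS : r ∉ S) {s : V} (hs : s ∈ insert r S) :
    nearestAncestorIn par d r S s = s := by
  rcases mem_insert.1 hs with rfl | hs
  · have hempty : ({a ∈ S | IsAncestor par a s} : Finset V) = ∅ := by
      refine filter_eq_empty_iff.2 fun a ha hanc => hrS ?_
      rwa [← eq_root_of_isAncestor_root hroot hanc]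
    rw [nearestAncestorIn, hempty, deepest, dif_neg Finset.not_nonempty_empty]
  · have hself : s ∈ ({a ∈ S | IsAncestor par a s} : Finset V) :=
      mem_filter.2 ⟨hs, Relation.ReflTransGen.refl⟩
    exact eq_of_isAncestor_of_depth_le hroot hd (mem_filter.1 (deepest_mem ⟨s, hself⟩)).2
      (le_depth_deepest hself)

theorem exists_separating_ancestor_of_nearestAncestorIn_ne {a b : V}
    (h : nearestAncestorIn par d r S a ≠ nearestAncestorIn par d r S b) :
    ∃ w ∈ S, ¬(IsAncestor par w a ↔ IsAncestor par w b) := by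
  by_contra! hiff
  exact h (congrArg (deepest d r) (filter_congr fun w hw => hiff w hw))

end ParentTree

section Fibers

variable {V ι : Type*} [Fintype V] {k : ℕ}

theorem isPartitionOn_fibers {key : V → Fin k} (hkey : Function.Surjective key) :
    IsPartitionOn k fun i => {v | key v = i} := by
  refine ⟨fun i => ?_, fun i j hij => ?_, fun v => ⟨key v, by simp⟩⟩
  · obtain ⟨v, rfl⟩ := hkey i
    exact ⟨v, by simp⟩
  · refine disjoint_left.2 fun v hi hj => hij ?_
    simp only [mem_filter, mem_univ, true_and] at hi hj
    exact hi ▸ hj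

theorem cutVal_fibers [Fintype ι] (ends : ι → V × V) (key : V → Fin k) :
    cutVal ends (fun i => {v | key v = i}) = #{e | key (ends e).1 ≠ key (ends e).2} := by
  simp [cutVal, eq_comm]

end Fibers

theorem exists_isPartitionOn_cutVal_eq {V ι : Type*} [Fintype V] [Fintype ι]
    (ends : ι → V × V) (T : Finset V) {k : ℕ} (hT : #T = k) (g : V → V)
    (hgT : ∀ v, g v ∈ T) (hg : ∀ t ∈ T, g t = t) :
    ∃ P : Fin k → Finset V, IsPartitionOn k P ∧
      cutVal ends P = #{e | g (ends e).1 ≠ g (ends e).2} := by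
  let π : T ≃ Fin k := Fintype.equivFinOfCardEq (by rw [Fintype.card_coe, hT])
  let key : V → Fin k := fun v => π ⟨g v, hgT v⟩
  have hkey : Function.Surjective key := fun i =>
    ⟨π.symm i, by simp only [key, hg _ (π.symm i).2, Subtype.coe_eta, Equiv.apply_symm_apply]⟩
  refine ⟨_, isPartitionOn_fibers hkey, (cutVal_fibers ends key).trans ?_⟩
  simp [key, π.apply_eq_iff_eq]

open ParentTree in
theorem stmt_17_general {V ι : Type*} [Fintype V] [Fintype ι]
    (ends : ι → V × V)
    (par : V → V) (r : V) (d : V → ℕ)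
    (hroot : par r = r) (hd : ∀ v, v ≠ r → d v = d (par v) + 1)
    (prec : V → V → Prop)
    (hprec : prec = fun a b => Relation.ReflTransGen (fun s t => t = par s) b a)
    (ℓ k : ℕ) (hk : 1 ≤ k)
    (U : Fin ℓ → Finset V)
    (hchild : ∀ i, ∀ u ∈ U i, par u = r ∧ u ≠ r)
    (hdisj : ∀ i j, i ≠ j → Disjoint (U i) (U j))
    (hcard : ∑ i, (U i).card = k - 1)
    (f : Fin ℓ → ℕ)
    (hf : ∀ i, ∃ t : V → V, (∀ u ∈ U i, prec u (t u)) ∧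
      (Finset.univ.filter fun e : ι => ∃ u ∈ U i,
        (prec (t u) (ends e).1 ∧ ¬ prec (t u) (ends e).2) ∨
        (¬ prec (t u) (ends e).1 ∧ prec (t u) (ends e).2)).card ≤ f i)
    (opt : ℕ)
    (hopt : IsLeast
      {c : ℕ | ∃ P : Fin k → Finset V, IsPartitionOn k P ∧ c = cutVal ends P} opt) :
    opt ≤ ∑ i, f i := by
  obtain rfl : prec = IsAncestor par := hprec
  choose t ht_below ht_cut using hf
  set S := (univ.sigma U).image fun p : Σ _, V => t p.1 p.2
  have hinj : Set.InjOn (fun p : Σ _, V => t p.1 p.2) (univ.sigma U) := by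
    rintro ⟨i, u⟩ hu ⟨j, u'⟩ hu' heq
    simp only [mem_coe, mem_sigma, mem_univ, true_and] at hu hu' heq
    obtain rfl : u = u' := children_eq_of_isAncestor hroot (hchild i u hu) (hchild j u' hu')
      (ht_below i u hu) (heq ▸ ht_below j u' hu')
    obtain rfl : i = j := by
      by_contra hij
      exact disjoint_left.1 (hdisj i j hij) hu hu'
    rfl
  have hrS : r ∉ S := by
    simp only [S, mem_image, mem_sigma, mem_univ, true_and, not_exists, not_and]
    rintro ⟨i, u⟩ hu hr
    exact (hchild i u hu).2 (eq_root_of_isAncestor_root hroot (hr ▸ ht_below i u hu))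
  have hcardT : #(insert r S) = k := by
    rw [card_insert_of_notMem hrS, card_image_of_injOn hinj, card_sigma, hcard]
    omega
  set g := nearestAncestorIn par d r S
  obtain ⟨P, hP, hcut⟩ := exists_isPartitionOn_cutVal_eq ends (insert r S) hcardT g
    nearestAncestorIn_mem (fun _ => nearestAncestorIn_of_mem_insert hroot hd hrS)
  have hsplit : ({e | g (ends e).1 ≠ g (ends e).2} : Finset ι) ⊆ univ.biUnion fun i =>
      {e | ∃ u ∈ U i,
        (IsAncestor par (t i u) (ends e).1 ∧ ¬IsAncestor par (t i u) (ends e).2) ∨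
        (¬IsAncestor par (t i u) (ends e).1 ∧ IsAncestor par (t i u) (ends e).2)} := by
    intro e he
    obtain ⟨w, hw, hsep⟩ :=
      exists_separating_ancestor_of_nearestAncestorIn_ne (mem_filter.1 he).2
    obtain ⟨⟨i, u⟩, hu, rfl⟩ := mem_image.1 hw
    simp only [mem_biUnion, mem_filter, mem_univ, true_and]
    exact ⟨i, u, (mem_sigma.1 hu).2, by tauto⟩
  calc opt ≤ cutVal ends P := hopt.2 ⟨P, hP, rfl⟩
    _ = #{e | g (ends e).1 ≠ g (ends e).2} := hcut
    _ ≤ ∑ i, f i :=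
      (card_le_card hsplit).trans (card_biUnion_le.trans (sum_le_sum fun i _ => ht_cut i))

/-- Knapsack lower bound for the restricted TreeCut algorithm: `T` is a tree on the
vertices of a multigraph `G` rooted at `r` that is a disjoint union of maximal branches
(encoded by parent map `par` and depth `d`). The `U i` are sets of children of `r` with
pairwise disjoint branch sets, `∑ |U i| = k − 1`, and each `f i` upper-bounds the
number of `G`-edges cut by some choice of one edge per branch of `U i` (cutting the
parent edge of a chosen vertex `t u ∈ T(u)` for each `u ∈ U i`). Then the minimum
`k`-cut value `opt` of `G` satisfies `opt ≤ ∑ f i`. -/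
theorem stmt_17 {V ι : Type*} [Fintype V] [DecidableEq V] [Fintype ι]
    (ends : ι → V × V)
    (par : V → V) (r : V) (d : V → ℕ)
    (hroot : par r = r) (hd : ∀ v, v ≠ r → d v = d (par v) + 1)
    (prec : V → V → Prop)
    (hprec : prec = fun a b => Relation.ReflTransGen (fun s t => t = par s) b a)
    (ℓ k : ℕ) (hk : 1 ≤ k)
    (U : Fin ℓ → Finset V)
    (hchild : ∀ i, ∀ u ∈ U i, par u = r ∧ u ≠ r)
    (hdisj : ∀ i j, i ≠ j → Disjoint (U i) (U j))
    (hcard : ∑ i, (U i).card = k - 1)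
    (f : Fin ℓ → ℕ)
    (hf : ∀ i, ∃ t : V → V, (∀ u ∈ U i, prec u (t u)) ∧
      (Finset.univ.filter fun e : ι => ∃ u ∈ U i,
        (prec (t u) (ends e).1 ∧ ¬ prec (t u) (ends e).2) ∨
        (¬ prec (t u) (ends e).1 ∧ prec (t u) (ends e).2)).card ≤ f i)
    (opt : ℕ)
    (hopt : IsLeast
      {c : ℕ | ∃ P : Fin k → Finset V, IsPartitionOn k P ∧ c = cutVal ends P} opt) :
    opt ≤ ∑ i, f i :=
  stmt_17_general ends par r d hroot hd prec hprec ℓ k hk U hchild hdisj hcard f hf opt hopt
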